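/- arXiv:1705.06413 — 8 statements merged into one kernel-verified Lean document; each statement's English description precedes it below -/
import Mathlib

section
/- Let p be a prime with p ≡ 3 (mod 4), and write p = 4k+3. If a is a nonzero quadratic residue mod p, then the set {a + s : s a quadratic non-residue mod p} contains 0, exactly k nonzero quadratic residues, and exactly k quadratic non-residues. -/
/-!
Write χ for the quadratic character. Since `-1` is a non-residue, negation exchanges residues and
non-residues, so there are `(p - 1) / 2 = 2k + 1` non-residues. The translate of the non-residues
by `a` is `{x | χ (x - a) = -1}`, of the same size, and contains `0` because `χ (-a) = -χ a = -1`.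
Its other `2k` elements split evenly: the involution `x ↦ (a⁻¹ - x⁻¹)⁻¹`, the reflection
`u ↦ a⁻¹ - u` in the coordinate `u = x⁻¹`, equals `a x / (x - a)`, so it preserves `χ (x - a)` and
multiplies `χ x` by `χ a * χ (x - a) = -1`.
-/

open Finset

section QuadraticChar

variable {F : Type*} [Field F] [Fintype F] [DecidableEq F]

local notation "χ" => quadraticChar F

theorem quadraticChar_eq_one_iff {x : F} : χ x = 1 ↔ x ≠ 0 ∧ IsSquare x := by
  refine ⟨fun h ↦ ?_, fun h ↦ (quadraticChar_one_iff_isSquare h.1).mpr h.2⟩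
  have hx : x ≠ 0 := by rintro rfl; simp at h
  exact ⟨hx, (quadraticChar_one_iff_isSquare hx).mp h⟩

theorem quadraticChar_eq_neg_one_iff {x : F} : χ x = -1 ↔ x ≠ 0 ∧ ¬IsSquare x := by
  rw [quadraticChar_neg_one_iff_not_isSquare]
  exact ⟨fun h ↦ ⟨fun h₀ ↦ h (h₀ ▸ .zero), h⟩, And.right⟩

theorem quadraticChar_neg_of_neg_one (h : χ (-1) = -1) (x : F) : χ (-x) = -χ x := by
  rw [neg_eq_neg_one_mul, map_mul, h, neg_one_mul]

theorem quadraticChar_zero_sub_eq_neg_one (h : χ (-1) = -1) {a : F} (ha : χ a = 1) :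
    χ (0 - a) = -1 := by
  rw [zero_sub, quadraticChar_neg_of_neg_one h, ha]

theorem quadraticChar_sub_eq_neg_one_iff {a x : F} :
    χ (x - a) = -1 ↔ ∃ s : F, s ≠ 0 ∧ ¬IsSquare s ∧ x = a + s := by
  rw [quadraticChar_neg_one_iff_not_isSquare]
  constructor
  · intro h
    exact ⟨x - a, fun h0 ↦ h (h0 ▸ .zero), h, by ring⟩
  · rintro ⟨s, -, hs, rfl⟩
    simpa using hs

theorem card_filter_quadraticChar (s : Finset F) :
    #{x ∈ s | χ x = 1} + #{x ∈ s | χ x = -1} + #{x ∈ s | x = 0} = #s := by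
  have hdisj : Disjoint {x ∈ s | χ x = -1} {x ∈ s | x = 0} :=
    disjoint_filter.mpr fun x _ h hx ↦ by simp [hx] at h
  rw [add_assoc, ← card_union_of_disjoint hdisj, ← filter_or,
    ← card_filter_add_card_filter_not (s := s) (p := fun x ↦ χ x = 1)]
  congr 2
  refine filter_congr fun x _ ↦ ?_
  rcases eq_or_ne x 0 with rfl | hx
  · simp
  · rcases quadraticChar_dichotomy hx with h | h <;> simp [h, hx]

theorem card_quadraticChar_eq_one (h : χ (-1) = -1) :
    #{x : F | χ x = 1} = #{x : F | χ x = -1} := by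
  refine card_nbij' Neg.neg Neg.neg ?_ ?_ (fun x _ ↦ neg_neg x) (fun x _ ↦ neg_neg x) <;>
  · intro x hx
    simp only [coe_filter, mem_univ, true_and, Set.mem_ofPred_eq] at hx ⊢
    simp [quadraticChar_neg_of_neg_one h, hx]

theorem two_mul_card_quadraticChar_eq_neg_one_add_one (h : χ (-1) = -1) :
    2 * #{x : F | χ x = -1} + 1 = Fintype.card F := by
  have := card_filter_quadraticChar (univ : Finset F)
  rw [card_quadraticChar_eq_one h, filter_eq', if_pos (mem_univ 0), card_singleton,
    card_univ] at this
  omega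

theorem card_quadraticChar_sub_eq_neg_one (a : F) :
    #{x : F | χ (x - a) = -1} = #{x : F | χ x = -1} :=
  card_nbij' (· - a) (· + a) (by intro x; simp) (by intro x; simp) (fun x _ ↦ sub_add_cancel x a)
    (fun x _ ↦ add_sub_cancel_right x a)

theorem quadraticChar_inv_sub_inv_inv {a x : F} (ha : a ≠ 0) (hx : x ≠ 0) (hxa : x ≠ a) :
    χ (a⁻¹ - x⁻¹)⁻¹ = χ a * χ x * χ (x - a) := by
  have hxa' : x - a ≠ 0 := sub_ne_zero.mpr hxa
  rw [show (a⁻¹ - x⁻¹)⁻¹ = a * x * (x - a) * ((x - a)⁻¹) ^ 2 by field_simp,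
    map_mul, quadraticChar_sq_one' (inv_ne_zero hxa'), map_mul, map_mul, mul_one]

theorem quadraticChar_inv_sub_inv_inv_sub {a x : F} (ha : a ≠ 0) (hx : x ≠ 0) (hxa : x ≠ a) :
    χ ((a⁻¹ - x⁻¹)⁻¹ - a) = χ (x - a) := by
  have hxa' : x - a ≠ 0 := sub_ne_zero.mpr hxa
  rw [show (a⁻¹ - x⁻¹)⁻¹ - a = (x - a) * (a / (x - a)) ^ 2 by field_simp; ring,
    map_mul, quadraticChar_sq_one' (div_ne_zero ha hxa'), mul_one]

theorem quadraticChar_inv_sub_inv_inv_of_sub_eq_neg_one {a x : F} (ha : χ a = 1)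
    (hxa : χ (x - a) = -1) (hx : x ≠ 0) :
    χ ((a⁻¹ - x⁻¹)⁻¹ - a) = -1 ∧ χ (a⁻¹ - x⁻¹)⁻¹ = -χ x := by
  have ha₀ : a ≠ 0 := fun h ↦ by simp [h] at ha
  have hxa₀ : x ≠ a := fun h ↦ by simp [h] at hxa
  refine ⟨?_, ?_⟩
  · rw [quadraticChar_inv_sub_inv_inv_sub ha₀ hx hxa₀, hxa]
  · rw [quadraticChar_inv_sub_inv_inv ha₀ hx hxa₀, ha, hxa]
    ring

theorem card_quadraticChar_eq_one_of_sub_eq_neg_one {a : F} (ha : χ a = 1) :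
    #{x : F | χ (x - a) = -1 ∧ χ x = 1} = #{x : F | χ (x - a) = -1 ∧ χ x = -1} := by
  let f : F → F := fun x ↦ (a⁻¹ - x⁻¹)⁻¹
  have hf : f.Involutive := fun x ↦ by simp [f]
  refine card_nbij' f f ?_ ?_ (fun x _ ↦ hf x) (fun x _ ↦ hf x) <;>
  · intro x hx
    simp only [coe_filter, mem_univ, true_and, Set.mem_ofPred_eq] at hx ⊢
    have hx₀ : x ≠ 0 := fun h ↦ by simp [h] at hx
    obtain ⟨hsub, hinv⟩ := quadraticChar_inv_sub_inv_inv_of_sub_eq_neg_one ha hx.1 hx₀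
    exact ⟨hsub, by simp only [f, hinv, hx.2, neg_neg]⟩

theorem two_mul_card_quadraticChar_eq_one_of_sub_eq_neg_one_add_one (h : χ (-1) = -1) {a : F}
    (ha : χ a = 1) :
    2 * #{x : F | χ (x - a) = -1 ∧ χ x = 1} + 1 = #{x : F | χ x = -1} := by
  have h₀ : (0 : F) ∈ ({x : F | χ (x - a) = -1} : Finset F) :=
    mem_filter.mpr ⟨mem_univ 0, quadraticChar_zero_sub_eq_neg_one h ha⟩
  have := card_filter_quadraticChar {x : F | χ (x - a) = -1}
  rw [filter_filter, filter_filter, filter_eq', if_pos h₀, card_singleton,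
    ← card_quadraticChar_eq_one_of_sub_eq_neg_one ha, card_quadraticChar_sub_eq_neg_one] at this
  omega

end QuadraticChar

theorem stmt1 (p k : ℕ) [Fact p.Prime] (hpk : p = 4 * k + 3)
    (a : ZMod p) (ha : a ≠ 0) (haQ : IsSquare a) :
    (0 : ZMod p) ∈ {x : ZMod p | ∃ s : ZMod p, s ≠ 0 ∧ ¬ IsSquare s ∧ x = a + s} ∧
    {x : ZMod p | (∃ s : ZMod p, s ≠ 0 ∧ ¬ IsSquare s ∧ x = a + s) ∧ x ≠ 0 ∧ IsSquare x}.ncard = k ∧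
    {x : ZMod p | (∃ s : ZMod p, s ≠ 0 ∧ ¬ IsSquare s ∧ x = a + s) ∧ x ≠ 0 ∧ ¬ IsSquare x}.ncard = k := by
  have h₁ : quadraticChar (ZMod p) (-1) = -1 := by
    rw [quadraticChar_neg_one_iff_not_isSquare, ZMod.exists_sq_eq_neg_one_iff]
    omega
  have haχ : quadraticChar (ZMod p) a = 1 := (quadraticChar_one_iff_isSquare ha).mpr haQ
  have hN := two_mul_card_quadraticChar_eq_neg_one_add_one h₁
  have hA := two_mul_card_quadraticChar_eq_one_of_sub_eq_neg_one_add_one h₁ haχ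
  have hAB := card_quadraticChar_eq_one_of_sub_eq_neg_one haχ
  rw [ZMod.card] at hN
  simp only [← quadraticChar_sub_eq_neg_one_iff, ← quadraticChar_eq_one_iff,
    ← quadraticChar_eq_neg_one_iff, ← coe_filter_univ, Set.ncard_coe_finset]
  refine ⟨?_, ?_, ?_⟩
  · rw [coe_filter_univ]
    exact quadraticChar_zero_sub_eq_neg_one h₁ haχ
  · omega
  · omega
end

section
/- Let p be a prime with p ≡ 3 (mod 4), and write p = 4k+3. If a is a quadratic non-residue mod p, then the set {a + s : s a quadratic non-residue mod p} contains exactly k+1 nonzero quadratic residues and exactly k quadratic non-residues (and does not contain 0). -/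
open Finset

/-- Key character sum: `∑ s, χ(s) χ(a+s) = -1` for `a ≠ 0`. -/
lemma quadChar_shift_sum {p : ℕ} [Fact p.Prime] (hp2 : ringChar (ZMod p) ≠ 2)
    {a : ZMod p} (ha : a ≠ 0) :
    ∑ s : ZMod p, quadraticChar (ZMod p) s * quadraticChar (ZMod p) (a + s) = -1 := by
  set χ := quadraticChar (ZMod p) with hχ
  have h0 : ∑ s : ZMod p, χ s * χ (a + s)
      = ∑ s ∈ Finset.univ.erase (0 : ZMod p), χ s * χ (a + s) := by
    rw [Finset.sum_erase _ (by rw [hχ, quadraticChar_zero, zero_mul])]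
  rw [h0]
  have hterm : ∀ s ∈ Finset.univ.erase (0 : ZMod p), χ s * χ (a + s) = χ (1 + a * s⁻¹) := by
    intro s hs
    have hs0 : s ≠ 0 := by simpa using (Finset.mem_erase.mp hs).1
    have : χ s * χ (a + s) = χ (s * (a + s)) := (map_mul χ s (a + s)).symm
    rw [this]
    have h1 : s * (a + s) = s ^ 2 * (1 + a * s⁻¹) := by
      field_simp; ring
    rw [h1, map_mul, quadraticChar_sq_one' hs0, one_mul]
  rw [Finset.sum_congr rfl hterm]
  have hbij : ∑ s ∈ Finset.univ.erase (0 : ZMod p), χ (1 + a * s⁻¹)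
      = ∑ y ∈ Finset.univ.erase (1 : ZMod p), χ y := by
    refine Finset.sum_nbij' (fun s => 1 + a * s⁻¹) (fun y => a * (y - 1)⁻¹) ?_ ?_ ?_ ?_ ?_
    · intro s hs
      have hs0 : s ≠ 0 := by simpa using (Finset.mem_erase.mp hs).1
      simp only [Finset.mem_erase, Finset.mem_univ, and_true]
      intro h
      have : a * s⁻¹ = 0 := by linear_combination h
      rcases mul_eq_zero.mp this with h' | h'
      · exact ha h'
      · exact hs0 (by simpa using inv_eq_zero.mp h')
    · intro y hy
      have hy1 : y ≠ 1 := by simpa using (Finset.mem_erase.mp hy).1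
      simp only [Finset.mem_erase, Finset.mem_univ, and_true]
      intro h
      rcases mul_eq_zero.mp h with h' | h'
      · exact ha h'
      · exact hy1 (by have := inv_eq_zero.mp h'; linear_combination this)
    · intro s hs
      have hs0 : s ≠ 0 := by simpa using (Finset.mem_erase.mp hs).1
      show a * ((1 + a * s⁻¹) - 1)⁻¹ = s
      have h1 : (1 : ZMod p) + a * s⁻¹ - 1 = a * s⁻¹ := by ring
      rw [h1, mul_inv, inv_inv, ← mul_assoc, mul_inv_cancel₀ ha, one_mul]
    · intro y hy
      have hy1 : y ≠ 1 := by simpa using (Finset.mem_erase.mp hy).1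
      have hy0 : y - 1 ≠ 0 := sub_ne_zero.mpr hy1
      show 1 + a * (a * (y - 1)⁻¹)⁻¹ = y
      rw [mul_inv, inv_inv, ← mul_assoc, mul_inv_cancel₀ ha, one_mul]
      ring
    · intro s _; rfl
  rw [hbij, Finset.sum_erase_eq_sub (Finset.mem_univ _), quadraticChar_sum_zero hp2,
    map_one]
  ring

theorem stmt2 (p k : ℕ) [Fact p.Prime] (hpk : p = 4 * k + 3)
    (a : ZMod p) (ha : a ≠ 0) (haN : ¬ IsSquare a) :
    {x : ZMod p | (∃ s : ZMod p, s ≠ 0 ∧ ¬ IsSquare s ∧ x = a + s) ∧ x ≠ 0 ∧ IsSquare x}.ncard = k + 1 ∧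
    {x : ZMod p | (∃ s : ZMod p, s ≠ 0 ∧ ¬ IsSquare s ∧ x = a + s) ∧ x ≠ 0 ∧ ¬ IsSquare x}.ncard = k ∧
    (0 : ZMod p) ∉ {x : ZMod p | ∃ s : ZMod p, s ≠ 0 ∧ ¬ IsSquare s ∧ x = a + s} := by
  classical
  have hp2 : ringChar (ZMod p) ≠ 2 := by
    rw [ZMod.ringChar_zmod_n]; omega
  have hχa : quadraticChar (ZMod p) a = -1 := quadraticChar_neg_one_iff_not_isSquare.mpr haN
  have hm1 : ¬ IsSquare (-1 : ZMod p) := by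
    rw [ZMod.exists_sq_eq_neg_one_iff]; omega
  have hsqna : IsSquare (-a) := by
    have hna : (-a : ZMod p) ≠ 0 := neg_ne_zero.mpr ha
    have : quadraticChar (ZMod p) (-a) = 1 := by
      have : (-a : ZMod p) = -1 * a := by ring
      rw [this, map_mul, quadraticChar_neg_one_iff_not_isSquare.mpr hm1, hχa]; ring
    exact (quadraticChar_one_iff_isSquare hna).mp this
  -- the 0 ∉ part
  have h0notin : (0 : ZMod p) ∉ {x : ZMod p | ∃ s : ZMod p, s ≠ 0 ∧ ¬ IsSquare s ∧ x = a + s} := by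
    rintro ⟨s, hs0, hsN, hzero⟩
    have hs : s = -a := by linear_combination -hzero
    rw [hs] at hsN
    exact hsN hsqna
  -- Finsets
  set N : Finset (ZMod p) := Finset.univ.filter (fun s => s ≠ 0 ∧ ¬ IsSquare s) with hNdef
  set T : Finset (ZMod p) := N.filter (fun s => ¬ IsSquare (a + s)) with hTdef
  set T' : Finset (ZMod p) := N.filter (fun s => IsSquare (a + s)) with hT'def
  have hshift : ∑ s : ZMod p, quadraticChar (ZMod p) (a + s) = 0 := by
    rw [Fintype.sum_bijective (fun s : ZMod p => a + s) (Equiv.addLeft a).bijective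
      (fun s => quadraticChar (ZMod p) (a + s)) (quadraticChar (ZMod p)) (fun x => rfl)]
    exact quadraticChar_sum_zero hp2
  have hone : ∑ _s : ZMod p, (1 : ℤ) = (p : ℤ) := by
    simp [ZMod.card]
  -- cardinality of N
  have hN : N.card = 2 * k + 1 := by
    have hpt : ∀ s : ZMod p, (1 : ℤ) - quadraticChar (ZMod p) s =
        (if s ≠ 0 ∧ ¬ IsSquare s then 2 else 0) + (if s = 0 then 1 else 0) := by
      intro s
      by_cases hs0 : s = 0
      · rw [hs0, quadraticChar_zero]
        simp
      by_cases hsq : IsSquare s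
      · rw [(quadraticChar_one_iff_isSquare hs0).mpr hsq]
        simp [hs0, hsq]
      · rw [quadraticChar_neg_one_iff_not_isSquare.mpr hsq]
        simp [hs0, hsq]
    have hsum : ∑ s : ZMod p, ((1 : ℤ) - quadraticChar (ZMod p) s) = 2 * N.card + 1 := by
      rw [Finset.sum_congr rfl (fun s _ => hpt s), Finset.sum_add_distrib]
      rw [Finset.sum_ite_eq' Finset.univ (0 : ZMod p) (fun _ => (1 : ℤ))]
      rw [← Finset.sum_filter]
      simp [hNdef, mul_comm]
    have hsum2 : ∑ s : ZMod p, ((1 : ℤ) - quadraticChar (ZMod p) s) = (p : ℤ) := by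
      rw [Finset.sum_sub_distrib, hone, quadraticChar_sum_zero hp2, sub_zero]
    rw [hsum2] at hsum
    have : (p : ℤ) = 4 * k + 3 := by exact_mod_cast congrArg (Nat.cast : ℕ → ℤ) hpk
    omega
  -- cardinality of T
  have hT : T.card = k := by
    have hpt : ∀ s : ZMod p, ((1 : ℤ) - quadraticChar (ZMod p) s) * (1 - quadraticChar (ZMod p) (a + s)) =
        (if (s ≠ 0 ∧ ¬ IsSquare s) ∧ ¬ IsSquare (a + s) then 4 else 0)
          + (if s = 0 then 2 else 0) := by
      intro s
      by_cases hs0 : s = 0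
      · rw [hs0, quadraticChar_zero, add_zero, hχa]
        norm_num
      by_cases hsq : IsSquare s
      · rw [(quadraticChar_one_iff_isSquare hs0).mpr hsq]
        simp [hs0, hsq]
      · rw [quadraticChar_neg_one_iff_not_isSquare.mpr hsq]
        have has0 : a + s ≠ 0 := by
          intro h
          have : s = -a := by linear_combination h
          rw [this] at hsq
          exact hsq hsqna
        by_cases hsq2 : IsSquare (a + s)
        · rw [(quadraticChar_one_iff_isSquare has0).mpr hsq2]
          simp [hs0, hsq, hsq2]
        · rw [quadraticChar_neg_one_iff_not_isSquare.mpr hsq2]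
          simp only [hs0, hsq, hsq2, not_false_iff, and_self, if_true, if_neg hs0, ne_eq,
            not_true, and_true, true_and]
          norm_num
    have hsum : ∑ s : ZMod p, ((1 : ℤ) - quadraticChar (ZMod p) s) * (1 - quadraticChar (ZMod p) (a + s)) = 4 * T.card + 2 := by
      rw [Finset.sum_congr rfl (fun s _ => hpt s), Finset.sum_add_distrib]
      rw [Finset.sum_ite_eq' Finset.univ (0 : ZMod p) (fun _ => (2 : ℤ))]
      rw [← Finset.sum_filter]
      have : Finset.univ.filter (fun s : ZMod p => (s ≠ 0 ∧ ¬ IsSquare s) ∧ ¬ IsSquare (a + s))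
          = T := by
        rw [hTdef, hNdef, Finset.filter_filter]
      rw [this]
      simp [mul_comm]
    have hsum2 : ∑ s : ZMod p, ((1 : ℤ) - quadraticChar (ZMod p) s) * (1 - quadraticChar (ZMod p) (a + s)) = (p : ℤ) - 1 := by
      have e1 : ∀ s : ZMod p, ((1 : ℤ) - quadraticChar (ZMod p) s) * (1 - quadraticChar (ZMod p) (a + s))
          = 1 - quadraticChar (ZMod p) s - quadraticChar (ZMod p) (a + s) + quadraticChar (ZMod p) s * quadraticChar (ZMod p) (a + s) := fun s => by ring
      rw [Finset.sum_congr rfl (fun s _ => e1 s), Finset.sum_add_distrib,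
        Finset.sum_sub_distrib, Finset.sum_sub_distrib, hone,
        quadraticChar_sum_zero hp2, hshift, quadChar_shift_sum hp2 ha]
      ring
    rw [hsum2] at hsum
    have : (p : ℤ) = 4 * k + 3 := by exact_mod_cast congrArg (Nat.cast : ℕ → ℤ) hpk
    omega
  -- cardinality of T'
  have hT' : T'.card = k + 1 := by
    have := Finset.card_filter_add_card_filter_not
      (s := N) (p := fun s => IsSquare (a + s))
    rw [← hT'def] at this
    have hTT : N.filter (fun s => ¬ IsSquare (a + s)) = T := rfl
    rw [hTT] at this
    omega
  -- relate sets to finsets via translation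
  have himg1 : {x : ZMod p | (∃ s : ZMod p, s ≠ 0 ∧ ¬ IsSquare s ∧ x = a + s) ∧ x ≠ 0 ∧ IsSquare x}
      = (fun s => a + s) '' (T' : Set (ZMod p)) := by
    ext x
    constructor
    · rintro ⟨⟨s, hs0, hsN, hx⟩, _, hxsq⟩
      refine ⟨s, ?_, hx.symm⟩
      rw [Finset.mem_coe, hT'def, Finset.mem_filter, hNdef, Finset.mem_filter]
      exact ⟨⟨Finset.mem_univ _, hs0, hsN⟩, hx ▸ hxsq⟩
    · rintro ⟨s, hs, hx⟩
      replace hx : a + s = x := hx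
      rw [Finset.mem_coe, hT'def, Finset.mem_filter, hNdef, Finset.mem_filter] at hs
      obtain ⟨⟨_, hs0, hsN⟩, hsq⟩ := hs
      have hx0 : x ≠ 0 := by
        intro h
        exact h0notin ⟨s, hs0, hsN, by rw [← h, hx]⟩
      exact ⟨⟨s, hs0, hsN, hx.symm⟩, hx0, hx ▸ hsq⟩
  have himg2 : {x : ZMod p | (∃ s : ZMod p, s ≠ 0 ∧ ¬ IsSquare s ∧ x = a + s) ∧ x ≠ 0 ∧ ¬ IsSquare x}
      = (fun s => a + s) '' (T : Set (ZMod p)) := by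
    ext x
    constructor
    · rintro ⟨⟨s, hs0, hsN, hx⟩, _, hxsq⟩
      refine ⟨s, ?_, hx.symm⟩
      rw [Finset.mem_coe, hTdef, Finset.mem_filter, hNdef, Finset.mem_filter]
      exact ⟨⟨Finset.mem_univ _, hs0, hsN⟩, hx ▸ hxsq⟩
    · rintro ⟨s, hs, hx⟩
      replace hx : a + s = x := hx
      rw [Finset.mem_coe, hTdef, Finset.mem_filter, hNdef, Finset.mem_filter] at hs
      obtain ⟨⟨_, hs0, hsN⟩, hsq⟩ := hs
      have hx0 : x ≠ 0 := by
        intro h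
        exact h0notin ⟨s, hs0, hsN, by rw [← h, hx]⟩
      exact ⟨⟨s, hs0, hsN, hx.symm⟩, hx0, hx ▸ hsq⟩
  have hinj : Function.Injective (fun s : ZMod p => a + s) := fun x y h => by
    simpa using h
  refine ⟨?_, ?_, h0notin⟩
  · rw [himg1, Set.ncard_image_of_injective _ hinj, Set.ncard_coe_finset, hT']
  · rw [himg2, Set.ncard_image_of_injective _ hinj, Set.ncard_coe_finset, hT]
end

section
/- Let p be a prime with p ≡ 3 (mod 4), let χ be the Legendre symbol mod p, and let S ⊆ ℤ/pℤ be a finite subset with f_S(x) = ∏_{a∈S}(x−a). If |S| is even then ∑_{a ∈ ℤ/pℤ} χ(f_S(a)) ≡ 3 (mod 4), and if |S| is odd then ∑_{a ∈ ℤ/pℤ} χ(f_S(a)) ≡ 0 (mod 4). -/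
open Finset

/-!
Off `S` every term `χ(f_S(a))` is `±1`, and for odd integers `εᵢ` one has
`∑ εᵢ ≡ N - 1 + ∏ εᵢ (mod 4)`, inductively because `(1 - ε)(1 - P) ≡ 0`. Here `N = p - |S|`
and `∏ εᵢ = χ(∏_{a ∉ S} f_S(a))`. For `b ∈ S`, Wilson's theorem `∏_{a ≠ b} (a - b) = -1`
gives `χ(∏_{a ∉ S} (a - b)) = χ(-1) χ(∏_{a ∈ S, a ≠ b} (a - b))`, and pairing `(a, b)` with
`(b, a)` shows that the product of the latter over `b ∈ S` is `χ(-1)^C(|S|, 2)`. So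
`∏ εᵢ = χ(-1)^C(|S| + 1, 2)` with `χ(-1) = -1`, and the claim depends only on `|S| mod 4`.
-/

theorem Int.sum_modEq_card_sub_one_add_prod {ι : Type*} (s : Finset ι) (f : ι → ℤ)
    (hf : ∀ i ∈ s, Odd (f i)) :
    ∑ i ∈ s, f i ≡ (#s : ℤ) - 1 + ∏ i ∈ s, f i [ZMOD 4] := by
  induction s using Finset.cons_induction with
  | empty => simp [Int.ModEq]
  | cons j s hj ih =>
    rw [forall_mem_cons] at hf
    have hprod : Odd (∏ i ∈ s, f i) :=
      prod_induction _ Odd (fun _ _ => Odd.mul) odd_one hf.2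
    obtain ⟨x, hx⟩ : Even (1 - f j) := odd_one.sub_odd hf.1
    obtain ⟨y, hy⟩ : Even (1 - ∏ i ∈ s, f i) := odd_one.sub_odd hprod
    rw [sum_cons, prod_cons, card_cons, Nat.cast_succ]
    refine ((ih hf.2).add_left (f j)).trans (Int.modEq_iff_dvd.mpr ⟨x * y, ?_⟩)
    linear_combination (1 - ∏ i ∈ s, f i) * hx + (x + x) * hy

theorem FiniteField.prod_erase_sub_eq_neg_one {K : Type*} [Field K] [Fintype K] [DecidableEq K]
    (b : K) : ∏ a ∈ univ.erase b, (a - b) = -1 := by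
  have h := congrArg Units.val (FiniteField.prod_univ_units_id_eq_neg_one (K := K))
  push_cast at h
  rw [← h]
  refine (prod_bij (fun (x : Kˣ) _ => (x : K) + b) ?_ ?_ ?_ ?_).symm
  · simp
  · exact fun _ _ _ _ h => Units.ext (add_right_cancel h)
  · intro a ha
    exact ⟨Units.mk0 (a - b) (sub_ne_zero.mpr (ne_of_mem_erase ha)), mem_univ _, by simp⟩
  · simp

theorem Int.neg_one_pow_choose_two (n : ℕ) :
    (-1 : ℤ) ^ n.choose 2 = if n % 4 < 2 then 1 else -1 := by
  induction n with
  | zero => simp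
  | succ n ih =>
    rw [Nat.choose_succ_succ', Nat.choose_one_right, pow_add, ih]
    rcases Nat.even_or_odd n with h | h
    · rw [h.neg_one_pow, one_mul]
      rw [Nat.even_iff] at h
      split_ifs <;> first | rfl | omega
    · rw [h.neg_one_pow]
      rw [Nat.odd_iff] at h
      split_ifs <;> first | rfl | omega

section QuadraticChar

variable {F : Type*} [Field F] [Fintype F] [DecidableEq F]

theorem quadraticChar_eq_mul_of_mul_eq {x y c : F} (hy : y ≠ 0) (h : x * y = c) :
    quadraticChar F x = quadraticChar F c * quadraticChar F y := by
  rw [← h, map_mul, mul_assoc, ← sq, quadraticChar_sq_one hy, mul_one]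

theorem quadraticChar_prod_prod_erase_sub (S : Finset F) :
    quadraticChar F (∏ b ∈ S, ∏ a ∈ S.erase b, (a - b)) =
      quadraticChar F (-1) ^ (#S).choose 2 := by
  induction S using Finset.induction_on with
  | empty => simp
  | insert c S hc ih =>
    have hinner : ∀ b ∈ S, ∏ a ∈ (insert c S).erase b, (a - b) =
        (c - b) * ∏ a ∈ S.erase b, (a - b) := fun b hb => by
      rw [erase_insert_of_ne (ne_of_mem_of_not_mem hb hc).symm,
        prod_insert fun h => hc (mem_of_mem_erase h)]
    have hsplit : ∏ b ∈ insert c S, ∏ a ∈ (insert c S).erase b, (a - b) =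
        ((-1) ^ #S * ∏ b ∈ S, (c - b)) *
          ((∏ b ∈ S, (c - b)) * ∏ b ∈ S, ∏ a ∈ S.erase b, (a - b)) := by
      rw [prod_insert hc, erase_insert hc, prod_congr rfl hinner, prod_mul_distrib, ← prod_neg]
      simp_rw [neg_sub]
    have hne : ∏ b ∈ S, (c - b) ≠ 0 :=
      prod_ne_zero_iff.mpr fun b hb => sub_ne_zero.mpr (ne_of_mem_of_not_mem hb hc).symm
    rw [hsplit, map_mul, map_mul, map_mul, map_pow, ih, card_insert_of_notMem hc,
      Nat.choose_succ_succ', Nat.choose_one_right, pow_add]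
    linear_combination (quadraticChar F (-1) ^ #S * quadraticChar F (-1) ^ (#S).choose 2) *
      quadraticChar_sq_one hne

theorem quadraticChar_prod_compl_sub {S : Finset F} {b : F} (hb : b ∈ S) :
    quadraticChar F (∏ a ∈ Sᶜ, (a - b)) =
      quadraticChar F (-1) * quadraticChar F (∏ a ∈ S.erase b, (a - b)) := by
  refine quadraticChar_eq_mul_of_mul_eq
    (prod_ne_zero_iff.mpr fun a ha => sub_ne_zero.mpr (ne_of_mem_erase ha)) ?_
  rw [← prod_union (disjoint_compl_left.mono_right (erase_subset b S)),
    ← FiniteField.prod_erase_sub_eq_neg_one b]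
  congr 1
  ext a
  simp only [mem_union, mem_compl, mem_erase, mem_univ, and_true]
  grind

theorem quadraticChar_prod_compl_prod_sub (S : Finset F) :
    quadraticChar F (∏ a ∈ Sᶜ, ∏ b ∈ S, (a - b)) = quadraticChar F (-1) ^ (#S + 1).choose 2 := by
  rw [prod_comm, map_prod, prod_congr rfl fun b hb => quadraticChar_prod_compl_sub hb,
    prod_mul_distrib, prod_const, ← map_prod, quadraticChar_prod_prod_erase_sub,
    Nat.choose_succ_succ', Nat.choose_one_right, pow_add]

theorem sum_quadraticChar_prod_sub_modEq (S : Finset F) :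
    ∑ a, quadraticChar F (∏ b ∈ S, (a - b)) ≡
      (#Sᶜ : ℤ) - 1 + quadraticChar F (-1) ^ (#S + 1).choose 2 [ZMOD 4] := by
  have hS : ∑ a ∈ S, quadraticChar F (∏ b ∈ S, (a - b)) = 0 :=
    sum_eq_zero fun a ha => by rw [prod_eq_zero ha (sub_self a), quadraticChar_zero]
  rw [← sum_add_sum_compl S, hS, zero_add, ← quadraticChar_prod_compl_prod_sub, map_prod]
  refine Int.sum_modEq_card_sub_one_add_prod _ _ fun a ha => ?_
  have hne : ∏ b ∈ S, (a - b) ≠ 0 :=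
    prod_ne_zero_iff.mpr fun b hb =>
      sub_ne_zero.mpr (ne_of_mem_of_not_mem hb (mem_compl.mp ha)).symm
  rcases quadraticChar_dichotomy hne with h | h <;> simp [h]

end QuadraticChar

theorem stmt6 (p : ℕ) [Fact p.Prime] (hp : p % 4 = 3) (S : Finset (ZMod p)) :
    (Even S.card → (∑ a : ZMod p, quadraticChar (ZMod p) (∏ b ∈ S, (a - b))) ≡ 3 [ZMOD 4]) ∧
    (Odd S.card → (∑ a : ZMod p, quadraticChar (ZMod p) (∏ b ∈ S, (a - b))) ≡ 0 [ZMOD 4]) := by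
  have hχ : quadraticChar (ZMod p) (-1) = -1 := by
    rw [quadraticChar_neg_one_iff_not_isSquare, ZMod.exists_sq_eq_neg_one_iff, hp]
    omega
  have hcard : (#Sᶜ : ℤ) + #S = p := by rw [← Nat.cast_add, card_compl_add_card, ZMod.card]
  have h := sum_quadraticChar_prod_sub_modEq S
  rw [hχ, Int.neg_one_pow_choose_two] at h
  rw [Nat.even_iff, Nat.odd_iff]
  refine ⟨fun hk => h.trans ?_, fun hk => h.trans ?_⟩ <;> unfold Int.ModEq <;> split_ifs <;> omega
end

section
/- Let p be a prime with p ≡ 3 (mod 4), let χ be the Legendre symbol mod p, let S ⊆ ℤ/pℤ with |S| ≥ 2, pick s ∈ S, and set R = S \ {s}. Then ∑_{a ∈ ℤ/pℤ} χ(f_S(a)) ≡ −p + |S| − ∑_{a ∈ ℤ/pℤ} χ(f_R(a)) + χ(f_R(s)) + ∑_{a ∈ R} χ(a−s) (mod 4). -/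
private lemma sum_modEq' {α : Type*} (s : Finset α) (f g : α → ℤ) (n : ℤ)
    (h : ∀ a ∈ s, f a ≡ g a [ZMOD n]) :
    (∑ a ∈ s, f a) ≡ (∑ a ∈ s, g a) [ZMOD n] := by
  classical
  induction s using Finset.induction with
  | empty => simp [Int.ModEq.refl]
  | @insert x t hx ih =>
    rw [Finset.sum_insert hx, Finset.sum_insert hx]
    exact (h x (Finset.mem_insert_self x t)).add
      (ih fun a ha => h a (Finset.mem_insert_of_mem ha))

theorem stmt8 (p : ℕ) [Fact p.Prime] (hp : p % 4 = 3) (S : Finset (ZMod p))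
    (hcard : 2 ≤ S.card) (s : ZMod p) (hs : s ∈ S) :
    (∑ a : ZMod p, quadraticChar (ZMod p) (∏ b ∈ S, (a - b))) ≡
      -(p : ℤ) + S.card - (∑ a : ZMod p, quadraticChar (ZMod p) (∏ b ∈ S.erase s, (a - b)))
        + quadraticChar (ZMod p) (∏ b ∈ S.erase s, (s - b))
        + ∑ a ∈ S.erase s, quadraticChar (ZMod p) (a - s) [ZMOD 4] := by
  classical
  set χ := quadraticChar (ZMod p) with hχ
  have hp' : Fact (p % 4 = 3) := ⟨hp⟩
  have hpprime : p.Prime := Fact.out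
  have hpodd : p ≠ 2 := by omega
  have hringchar : ringChar (ZMod p) ≠ 2 := by
    rw [ZMod.ringChar_zmod_n]; exact hpodd
  -- pointwise key congruence for a ∉ S
  have key : ∀ a : ZMod p, a ∉ S →
      (χ (∏ b ∈ S, (a - b)) : ℤ) ≡
        -1 - χ (a - s) - χ (∏ b ∈ S.erase s, (a - b)) [ZMOD 4] := by
    intro a ha
    have hsplit : (∏ b ∈ S, (a - b)) = (a - s) * ∏ b ∈ S.erase s, (a - b) :=
      (Finset.mul_prod_erase S _ hs).symm
    have hu : a - s ≠ 0 := sub_ne_zero.mpr (fun h => ha (h ▸ hs))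
    have hv : (∏ b ∈ S.erase s, (a - b)) ≠ 0 := by
      rw [Finset.prod_ne_zero_iff]
      intro b hb
      exact sub_ne_zero.mpr (fun h => ha (h ▸ (Finset.mem_of_mem_erase hb)))
    have hu' := quadraticChar_dichotomy hu
    have hv' := quadraticChar_dichotomy hv
    rw [hsplit, map_mul]
    rcases hu' with h1 | h1 <;> rcases hv' with h2 | h2 <;>
      rw [h1, h2] <;> decide
  -- sum over S of f_S terms is zero
  have hSsum : ∑ a ∈ S, (χ (∏ b ∈ S, (a - b)) : ℤ) = 0 := by
    apply Finset.sum_eq_zero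
    intro a ha
    have : (∏ b ∈ S, (a - b)) = 0 :=
      Finset.prod_eq_zero ha (by simp)
    rw [this, hχ]
    simp
  -- split full sums into Sᶜ and S
  have hsplit1 : (∑ a : ZMod p, (χ (∏ b ∈ S, (a - b)) : ℤ))
      = ∑ a ∈ Sᶜ, (χ (∏ b ∈ S, (a - b)) : ℤ) := by
    rw [← Finset.sum_add_sum_compl S, hSsum, zero_add]
  have hRsum : ∑ a ∈ S, (χ (∏ b ∈ S.erase s, (a - b)) : ℤ)
      = χ (∏ b ∈ S.erase s, (s - b)) := by
    rw [← Finset.add_sum_erase S _ hs]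
    have : ∑ a ∈ S.erase s, (χ (∏ b ∈ S.erase s, (a - b)) : ℤ) = 0 := by
      apply Finset.sum_eq_zero
      intro a ha
      have : (∏ b ∈ S.erase s, (a - b)) = 0 :=
        Finset.prod_eq_zero ha (by simp)
      rw [this, hχ]
      simp
    rw [this, add_zero]
  have hsplit2 : (∑ a : ZMod p, (χ (∏ b ∈ S.erase s, (a - b)) : ℤ))
      = (∑ a ∈ Sᶜ, (χ (∏ b ∈ S.erase s, (a - b)) : ℤ)) + χ (∏ b ∈ S.erase s, (s - b)) := by
    rw [← Finset.sum_add_sum_compl S, hRsum, add_comm]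
  -- linear character sum is zero over everything
  have hlinall : (∑ a : ZMod p, (χ (a - s) : ℤ)) = 0 := by
    rw [← quadraticChar_sum_zero hringchar]
    exact Fintype.sum_equiv (Equiv.subRight s) _ _ (fun a => rfl)
  have hlinS : ∑ a ∈ S, (χ (a - s) : ℤ) = ∑ a ∈ S.erase s, (χ (a - s) : ℤ) := by
    rw [← Finset.add_sum_erase S _ hs]
    rw [hχ]
    simp
  have hlinC : ∑ a ∈ Sᶜ, (χ (a - s) : ℤ) = -∑ a ∈ S.erase s, (χ (a - s) : ℤ) := by
    have := Finset.sum_add_sum_compl S (fun a => (χ (a - s) : ℤ))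
    rw [hlinall] at this
    rw [hlinS] at this
    linarith
  -- cardinality of complement
  have hcardle : S.card ≤ p := by
    simpa using Finset.card_le_card (Finset.subset_univ S)
  have hcardC : (Sᶜ.card : ℤ) = (p : ℤ) - S.card := by
    rw [Finset.card_compl]
    simp [ZMod.card]
    omega
  -- sum the key congruence
  have hmain : (∑ a ∈ Sᶜ, (χ (∏ b ∈ S, (a - b)) : ℤ)) ≡
      ∑ a ∈ Sᶜ, (-1 - χ (a - s) - χ (∏ b ∈ S.erase s, (a - b)) : ℤ) [ZMOD 4] := by
    apply sum_modEq'
    intro a ha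
    exact key a (Finset.mem_compl.mp ha)
  have hrhs : ∑ a ∈ Sᶜ, (-1 - χ (a - s) - χ (∏ b ∈ S.erase s, (a - b)) : ℤ)
      = -(p : ℤ) + S.card + ∑ a ∈ S.erase s, (χ (a - s) : ℤ)
        - ∑ a ∈ Sᶜ, (χ (∏ b ∈ S.erase s, (a - b)) : ℤ) := by
    simp only [Finset.sum_sub_distrib, Finset.sum_const, nsmul_eq_mul, mul_neg_one,
      hlinC]
    rw [hcardC]
    ring
  rw [hsplit1, hsplit2]
  calc (∑ a ∈ Sᶜ, (χ (∏ b ∈ S, (a - b)) : ℤ))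
      ≡ -(p : ℤ) + S.card + ∑ a ∈ S.erase s, (χ (a - s) : ℤ)
        - ∑ a ∈ Sᶜ, (χ (∏ b ∈ S.erase s, (a - b)) : ℤ) [ZMOD 4] := hrhs ▸ hmain
    _ = -(p : ℤ) + S.card
        - ((∑ a ∈ Sᶜ, (χ (∏ b ∈ S.erase s, (a - b)) : ℤ)) + χ (∏ b ∈ S.erase s, (s - b)))
        + χ (∏ b ∈ S.erase s, (s - b)) + ∑ a ∈ S.erase s, (χ (a - s) : ℤ) := by ring
end

section
/- Let C be a binary self-dual code of length n with weight enumerator A_C(x,y) = ∑_c x^{n−wt(c)} y^{wt(c)}, and suppose C is singly-even with doubly-even subcode C₀. Then the weight enumerator of the shadow S = C₀^⊥ \ C satisfies S_C(x,y) = (1/|C|) · A_C(x+y, i(x−y)), where i² = −1. -/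
/-!
Substituting `x ↦ x + y`, `y ↦ i (x - y)` in the monomial of a word `c` and expanding coordinatewise
gives `i ^ wt c * ∑ v, (-1) ^ (v ⬝ c) x ^ (n - wt v) y ^ wt v`. Checking one coordinate at a time,
`i ^ wt (a + b) * (-1) ^ (a ⬝ b) = i ^ wt a * i ^ wt b`, so on a self-orthogonal code
`c ↦ i ^ wt c * (-1) ^ (v ⬝ c)` is an additive character, and its sum over `C` is `|C|` or `0`
according as it is trivial or not. Both factors take values `±1`, and the kernel `C₀` of the first
has index two; hence the character is trivial exactly when `v` is orthogonal to `C₀` but not to `C`,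
i.e. when `v` lies in the shadow.
-/

open MvPolynomial

/-- Weight enumerator of a set of binary words, as a polynomial in two variables. -/
noncomputable def wEnum (n : ℕ) (S : Set (Fin n → ZMod 2)) : MvPolynomial (Fin 2) ℂ :=
  ∑ c : Fin n → ZMod 2,
    Set.indicator S (fun c => (X 0) ^ (n - hammingNorm c) * (X 1) ^ (hammingNorm c)) c

/-- The dual (orthogonal) set of a set of binary words. -/
def dualSet (n : ℕ) (S : Set (Fin n → ZMod 2)) : Set (Fin n → ZMod 2) :=
  {v | ∀ c ∈ S, ∑ i, v i * c i = 0}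

open Finset

namespace AddChar

variable {ι A M : Type*} [AddCommMonoid A] [CommMonoid M]

lemma map_sum_eq_prod (ψ : AddChar A M) (s : Finset ι) (f : ι → A) :
    ψ (∑ i ∈ s, f i) = ∏ i ∈ s, ψ (f i) :=
  map_prod ψ.toMonoidHom (fun i => Multiplicative.ofAdd (f i)) s

end AddChar

lemma zmod_two_eq_zero_or_eq_one (a : ZMod 2) : a = 0 ∨ a = 1 := by
  revert a; decide

def signChar (R : Type*) [CommRing R] : AddChar (ZMod 2) R := AddChar.zmodChar 2 (neg_one_sq)

lemma signChar_apply {R : Type*} [CommRing R] (a : ZMod 2) : signChar R a = (-1) ^ a.val := rfl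

lemma map_signChar {R S : Type*} [CommRing R] [CommRing S] (f : R →+* S) (a : ZMod 2) :
    f (signChar R a) = signChar S a := by
  simp [signChar_apply]

lemma signChar_eq_one_iff {R : Type*} [CommRing R] [CharZero R] {a : ZMod 2} :
    signChar R a = 1 ↔ a = 0 := by
  obtain rfl | rfl := zmod_two_eq_zero_or_eq_one a <;>
    norm_num [signChar_apply, ZMod.val_one_eq_one_mod]

section Coordinates

variable {ι : Type*} [Fintype ι]

lemma hammingNorm_eq_sum_val (c : ι → ZMod 2) : hammingNorm c = ∑ i, (c i).val := by
  rw [hammingNorm, card_filter]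
  refine sum_congr rfl fun i _ => ?_
  generalize c i = a
  fin_cases a <;> rfl

lemma prod_pow_one_sub_val_mul_pow_val {M : Type*} [CommMonoid M] (u w : M) (c : ι → ZMod 2) :
    ∏ i, u ^ (1 - (c i).val) * w ^ (c i).val =
      u ^ (Fintype.card ι - hammingNorm c) * w ^ hammingNorm c := by
  have hle : ∀ i ∈ univ, (c i).val ≤ 1 := fun i _ => Nat.le_of_lt_succ (ZMod.val_lt (c i))
  rw [prod_mul_distrib, prod_pow_eq_pow_sum, prod_pow_eq_pow_sum, sum_tsub_distrib _ hle,
    hammingNorm_eq_sum_val, sum_const, card_univ, smul_eq_mul, mul_one]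

lemma sum_signChar_mul_mul_pow {R : Type*} [CommRing R] (x y : R) (c : ZMod 2) :
    ∑ a : ZMod 2, signChar R (a * c) * (x ^ (1 - a.val) * y ^ a.val) =
      (x + y) ^ (1 - c.val) * (x - y) ^ c.val := by
  rw [show (univ : Finset (ZMod 2)) = {0, 1} by decide, sum_pair zero_ne_one]
  obtain rfl | rfl := zmod_two_eq_zero_or_eq_one c <;>
    simp [signChar_apply, ZMod.val_one_eq_one_mod]
  ring

theorem add_pow_mul_sub_pow_eq_sum {R : Type*} [CommRing R] [DecidableEq ι] (x y : R)
    (c : ι → ZMod 2) :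
    (x + y) ^ (Fintype.card ι - hammingNorm c) * (x - y) ^ hammingNorm c =
      ∑ v : ι → ZMod 2, signChar R (∑ i, v i * c i) *
        (x ^ (Fintype.card ι - hammingNorm v) * y ^ hammingNorm v) := by
  simp_rw [← prod_pow_one_sub_val_mul_pow_val, ← sum_signChar_mul_mul_pow x y, Fintype.prod_sum,
    prod_mul_distrib, AddChar.map_sum_eq_prod]

lemma I_pow_val_add_mul_signChar (a b : ZMod 2) :
    Complex.I ^ (a + b).val * signChar ℂ (a * b) = Complex.I ^ a.val * Complex.I ^ b.val := by
  obtain rfl | rfl := zmod_two_eq_zero_or_eq_one a <;>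
    obtain rfl | rfl := zmod_two_eq_zero_or_eq_one b <;>
    simp [signChar_apply, ZMod.val_one_eq_one_mod, CharTwo.add_self_eq_zero]

lemma I_pow_hammingNorm_eq_prod (c : ι → ZMod 2) :
    Complex.I ^ hammingNorm c = ∏ i, Complex.I ^ (c i).val := by
  rw [prod_pow_eq_pow_sum, hammingNorm_eq_sum_val]

lemma I_pow_hammingNorm_add_mul_signChar (a b : ι → ZMod 2) :
    Complex.I ^ hammingNorm (a + b) * signChar ℂ (∑ i, a i * b i) =
      Complex.I ^ hammingNorm a * Complex.I ^ hammingNorm b := by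
  simp_rw [I_pow_hammingNorm_eq_prod, AddChar.map_sum_eq_prod, ← prod_mul_distrib, Pi.add_apply,
    I_pow_val_add_mul_signChar]

end Coordinates

namespace AddChar

variable {G R : Type*} [AddCommGroup G] [Module (ZMod 2) G] [CommRing R]

lemma mul_self_eq_one_of_zmodModule (ψ : AddChar G R) (g : G) : ψ g * ψ g = 1 := by
  rw [← map_add_eq_mul, ZModModule.add_self, map_zero_eq_one]

lemma eq_one_or_eq_neg_one_of_zmodModule [NoZeroDivisors R] (ψ : AddChar G R) (g : G) :
    ψ g = 1 ∨ ψ g = -1 :=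
  mul_self_eq_one_iff.1 (ψ.mul_self_eq_one_of_zmodModule g)

lemma add_eq_zero_iff_ker_le_and_ne_zero [NoZeroDivisors R] {ω σ : AddChar G R} (hω : ω ≠ 0) :
    ω + σ = 0 ↔ (∀ g, ω g = 1 → σ g = 1) ∧ σ ≠ 0 := by
  have hsq := ω.mul_self_eq_one_of_zmodModule
  have hinv : ω + σ = 0 ↔ ∀ g, σ g = ω g := by
    simp only [eq_zero_iff, add_apply]
    exact forall_congr' fun g =>
      ⟨fun h => by linear_combination ω g * h - σ g * hsq g, fun h => h ▸ hsq g⟩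
  rw [hinv]
  constructor
  · refine fun h => ⟨fun g hg => (h g).trans hg, ?_⟩
    rintro rfl
    exact hω (eq_zero_iff.2 fun g => (h g).symm)
  · rintro ⟨hker, hσ⟩ g
    -- `ker ω` has index two: a `g₀` outside `ker σ` lies outside `ker ω`, and `g + g₀ ∈ ker ω`
    obtain ⟨g₀, hσg₀⟩ := ne_zero_iff.1 hσ
    have hωg₀ : ω g₀ = -1 :=
      (eq_one_or_eq_neg_one_of_zmodModule ω g₀).resolve_left (mt (hker g₀) hσg₀)
    replace hσg₀ : σ g₀ = -1 := (eq_one_or_eq_neg_one_of_zmodModule σ g₀).resolve_left hσg₀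
    rcases eq_one_or_eq_neg_one_of_zmodModule ω g with hωg | hωg
    · rw [hωg, hker g hωg]
    · have hsum := hker (g + g₀) (by rw [map_add_eq_mul, hωg, hωg₀, neg_one_mul, neg_neg])
      rw [map_add_eq_mul, hσg₀] at hsum
      rw [hωg]
      linear_combination -hsum

end AddChar

section SelfDualCode

variable {n : ℕ} {C : Submodule (ZMod 2) (Fin n → ZMod 2)}

def weightChar (hC : (C : Set (Fin n → ZMod 2)) ⊆ dualSet n C) : AddChar C ℂ where
  toFun c := Complex.I ^ hammingNorm (c : Fin n → ZMod 2)
  map_zero_eq_one' := by simp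
  map_add_eq_mul' a b := by
    rw [Submodule.coe_add, ← I_pow_hammingNorm_add_mul_signChar, hC a.2 b b.2,
      AddChar.map_zero_eq_one, mul_one]

lemma weightChar_eq_one_iff (hC : (C : Set (Fin n → ZMod 2)) ⊆ dualSet n C) (c : C) :
    weightChar hC c = 1 ↔ hammingNorm (c : Fin n → ZMod 2) % 4 = 0 :=
  (Complex.isPrimitiveRoot_I.pow_eq_one_iff_dvd _).trans Nat.dvd_iff_mod_eq_zero

def dotChar (C : Submodule (ZMod 2) (Fin n → ZMod 2)) (v : Fin n → ZMod 2) : AddChar C ℂ where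
  toFun c := signChar ℂ (∑ i, v i * (c : Fin n → ZMod 2) i)
  map_zero_eq_one' := by simp
  map_add_eq_mul' a b := by
    simp only [Submodule.coe_add, Pi.add_apply, mul_add, sum_add_distrib, AddChar.map_add_eq_mul]

lemma dotChar_eq_one_iff (v : Fin n → ZMod 2) (c : C) :
    dotChar C v c = 1 ↔ ∑ i, v i * (c : Fin n → ZMod 2) i = 0 :=
  signChar_eq_one_iff

lemma weightChar_add_dotChar_apply (hC : (C : Set (Fin n → ZMod 2)) ⊆ dualSet n C)
    (v : Fin n → ZMod 2) (c : C) :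
    (weightChar hC + dotChar C v) c =
      Complex.I ^ hammingNorm (c : Fin n → ZMod 2) *
        signChar ℂ (∑ i, v i * (c : Fin n → ZMod 2) i) :=
  rfl

theorem weightChar_add_dotChar_eq_zero_iff (hsd : (C : Set (Fin n → ZMod 2)) = dualSet n C)
    (hsing : ∃ c ∈ C, hammingNorm c % 4 = 2) (v : Fin n → ZMod 2) :
    weightChar hsd.subset + dotChar C v = 0 ↔
      v ∈ dualSet n {c | c ∈ C ∧ hammingNorm c % 4 = 0} \ C := by
  have hω : weightChar hsd.subset ≠ 0 := by
    obtain ⟨c, hc, hc2⟩ := hsing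
    refine AddChar.ne_zero_iff.2 ⟨⟨c, hc⟩, ?_⟩
    rw [Ne, weightChar_eq_one_iff, Submodule.coe_mk, hc2]
    norm_num
  have hvC : v ∉ (C : Set (Fin n → ZMod 2)) ↔ ∃ c ∈ C, ∑ i, v i * c i ≠ 0 := by
    conv_lhs => rw [hsd]
    simp [dualSet]
  rw [AddChar.add_eq_zero_iff_ker_le_and_ne_zero hω, AddChar.ne_zero_iff, Set.mem_sdiff, hvC]
  simp [weightChar_eq_one_iff, dotChar_eq_one_iff, dualSet]

end SelfDualCode

section WeightEnumerator

variable {n : ℕ}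

lemma wEnum_eq_sum_subtype (S : Set (Fin n → ZMod 2)) [DecidablePred (· ∈ S)] :
    wEnum n S = ∑ c : S,
      X 0 ^ (n - hammingNorm (c : Fin n → ZMod 2)) * X 1 ^ hammingNorm (c : Fin n → ZMod 2) :=
  sum_congr_set S _ _ (fun _ hc => Set.indicator_of_mem hc _)
    (fun _ hc => Set.indicator_of_notMem hc _)

lemma aeval_monomial_eq_sum (c : Fin n → ZMod 2) :
    aeval ![X 0 + X 1, MvPolynomial.C Complex.I * (X 0 - X 1)]
        (X 0 ^ (n - hammingNorm c) * X 1 ^ hammingNorm c : MvPolynomial (Fin 2) ℂ) =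
      ∑ v : Fin n → ZMod 2,
        MvPolynomial.C (Complex.I ^ hammingNorm c * signChar ℂ (∑ i, v i * c i)) *
          (X 0 ^ (n - hammingNorm v) * X 1 ^ hammingNorm v : MvPolynomial (Fin 2) ℂ) := by
  have hexp := add_pow_mul_sub_pow_eq_sum (X 0 : MvPolynomial (Fin 2) ℂ) (X 1) c
  rw [Fintype.card_fin] at hexp
  simp only [map_mul, map_pow, aeval_X, Matrix.cons_val_zero, Matrix.cons_val_one]
  rw [mul_pow, mul_left_comm, hexp, mul_sum]
  simp only [map_signChar, mul_assoc]

theorem aeval_wEnum_eq_card_mul_wEnum_shadow {C : Submodule (ZMod 2) (Fin n → ZMod 2)}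
    (hsd : (C : Set (Fin n → ZMod 2)) = dualSet n C) (hsing : ∃ c ∈ C, hammingNorm c % 4 = 2) :
    aeval ![X 0 + X 1, MvPolynomial.C Complex.I * (X 0 - X 1)] (wEnum n C) =
      MvPolynomial.C (Nat.card C : ℂ) *
        wEnum n (dualSet n {c | c ∈ C ∧ hammingNorm c % 4 = 0} \ C) := by
  classical
  rw [wEnum_eq_sum_subtype, map_sum]
  simp only [aeval_monomial_eq_sum, ← weightChar_add_dotChar_apply hsd.subset]
  rw [sum_comm, wEnum, mul_sum]
  refine sum_congr rfl fun v _ => ?_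
  rw [← sum_mul, ← map_sum, AddChar.sum_eq_ite, Set.indicator_apply, Nat.card_eq_fintype_card]
  simp only [weightChar_add_dotChar_eq_zero_iff hsd hsing]
  split_ifs <;> simp

end WeightEnumerator

theorem stmt11 (n : ℕ) (C : Submodule (ZMod 2) (Fin n → ZMod 2))
    (hsd : (C : Set (Fin n → ZMod 2)) = dualSet n C)
    (hsing : ∃ c ∈ C, hammingNorm c % 4 = 2) :
    wEnum n (dualSet n {c | c ∈ C ∧ hammingNorm c % 4 = 0} \ C) =
      MvPolynomial.C ((Nat.card C : ℂ))⁻¹ *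
        (aeval ![X 0 + X 1, MvPolynomial.C Complex.I * (X 0 - X 1)]) (wEnum n C) := by
  have hcard : (Nat.card C : ℂ) ≠ 0 := Nat.cast_ne_zero.2 Nat.card_pos.ne'
  rw [aeval_wEnum_eq_card_mul_wEnum_shadow hsd hsing, ← mul_assoc, ← map_mul,
    inv_mul_cancel₀ hcard, map_one, one_mul]
end

section
/- Let C be a binary self-dual singly-even code of length n whose shadow S (the set C₀^⊥ \ C, where C₀ is the doubly-even subcode) has minimum Hamming weight d. Then the weight enumerator A_C(x,y) of C is divisible by (x² + y²)^d in ℂ[x,y]. -/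
open MvPolynomial

/-!
Write `D` for the doubly-even subcode and `S = D^⊥ \ C` for the shadow. Evaluating the
MacWilliams identity `|U| · W_{U^⊥}(x, y) = W_U(x + y, x - y)` at `y ↦ i y` for `U = C` and for
`U = D^⊥` (where `|D^⊥| = 2 |C|`, because `D` has index two in `C`) and subtracting gives
`|C| · W_C(x, y) = W_S(x + i y, x - i y) = ∑_{s ∈ S} (x + i y)^(n - wt s) (x - i y)^(wt s)`.
The shadow is stable under adding the all-one word, so `d ≤ wt s ≤ n - d` on `S`, and every
summand is divisible by `((x + i y)(x - i y))^d = (x² + y²)^d`.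
-/

open Matrix

namespace BinaryCode

variable {n : ℕ}

def signChar : AddChar (ZMod 2) ℤ where
  toFun a := if a = 0 then 1 else -1
  map_zero_eq_one' := rfl
  map_add_eq_mul' := by decide

lemma signChar_one : signChar 1 = -1 := rfl

lemma signChar_eq_one_iff {a : ZMod 2} : signChar a = 1 ↔ a = 0 := by
  revert a; decide

abbrev dotForm (n : ℕ) : LinearMap.BilinForm (ZMod 2) (Fin n → ZMod 2) :=
  dotProductBilin (ZMod 2) (ZMod 2)

lemma dotForm_nondegenerate : (dotForm n).Nondegenerate := by
  refine ⟨fun v hv => funext fun i => ?_, fun v hv => funext fun i => ?_⟩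
  · simpa using hv (Pi.single i 1)
  · simpa using hv (Pi.single i 1)

lemma dotForm_isRefl : (dotForm n).IsRefl := fun v w h => by
  simpa [dotProduct_comm] using h

lemma mem_dualSet_iff {S : Set (Fin n → ZMod 2)} {v : Fin n → ZMod 2} :
    v ∈ dualSet n S ↔ ∀ c ∈ S, v ⬝ᵥ c = 0 := Iff.rfl

lemma coe_orthogonal_dotForm (U : Submodule (ZMod 2) (Fin n → ZMod 2)) :
    ((dotForm n).orthogonal U : Set (Fin n → ZMod 2)) = dualSet n U := by
  ext v
  simp [LinearMap.BilinForm.mem_orthogonal_iff, mem_dualSet_iff,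
    dotProduct_comm]

lemma card_orthogonal_mul_card (U : Submodule (ZMod 2) (Fin n → ZMod 2)) :
    Nat.card ((dotForm n).orthogonal U) * Nat.card U = 2 ^ n := by
  rw [Module.natCard_eq_pow_finrank (K := ZMod 2) (V := (dotForm n).orthogonal U),
    Module.natCard_eq_pow_finrank (K := ZMod 2) (V := U), Nat.card_zmod, ← pow_add,
    LinearMap.BilinForm.finrank_orthogonal dotForm_nondegenerate, Module.finrank_fin_fun,
    Nat.sub_add_cancel]
  simpa using U.finrank_le

lemma dualSet_coe_orthogonal_dotForm (U : Submodule (ZMod 2) (Fin n → ZMod 2)) :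
    dualSet n ((dotForm n).orthogonal U) = U := by
  rw [← coe_orthogonal_dotForm,
    LinearMap.BilinForm.orthogonal_orthogonal dotForm_nondegenerate dotForm_isRefl]

lemma sum_indicator_signChar_dotProduct (U : Submodule (ZMod 2) (Fin n → ZMod 2))
    (c : Fin n → ZMod 2) :
    ∑ v, (U : Set (Fin n → ZMod 2)).indicator (fun v => signChar (v ⬝ᵥ c)) v =
      (dualSet n U).indicator (fun _ => (Nat.card U : ℤ)) c := by
  classical
  let ψ : AddChar U ℤ :=
    signChar.compAddMonoidHom ((dotForm n).flip c ∘ₗ U.subtype).toAddMonoidHom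
  have hψ : ψ = 0 ↔ c ∈ dualSet n U := by
    simp [ψ, AddChar.eq_zero_iff, mem_dualSet_iff, dotProduct_comm, signChar_eq_one_iff]
  rw [Finset.sum_indicator_eq_sum_filter,
    Finset.sum_subtype (p := (· ∈ U)) (F := inferInstance) _ (by simp), Set.indicator_apply,
    Nat.card_eq_fintype_card, ← hψ, ← ψ.sum_eq_ite]
  simp [ψ, dotProduct_comm]

lemma _root_.AddChar.map_sum_eq_prod_s12 {ι A M : Type*} [AddCommMonoid A] [CommMonoid M]
    (ψ : AddChar A M) (s : Finset ι) (f : ι → A) : ψ (∑ i ∈ s, f i) = ∏ i ∈ s, ψ (f i) := by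
  classical
  induction s using Finset.induction_on with
  | empty => simp
  | insert i s hi ih => rw [Finset.sum_insert hi, Finset.prod_insert hi, ψ.map_add_eq_mul, ih]

section WeightEnumerator

open Finset

variable {R : Type*} [CommRing R]

noncomputable def weightEnum (S : Set (Fin n → ZMod 2)) (x y : R) : R :=
  ∑ c, S.indicator (fun c => x ^ (n - hammingNorm c) * y ^ hammingNorm c) c

lemma wEnum_eq_weightEnum (S : Set (Fin n → ZMod 2)) : wEnum n S = weightEnum S (X 0) (X 1) := rfl

lemma card_filter_eq_zero (c : Fin n → ZMod 2) : #{i | c i = 0} = n - hammingNorm c := by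
  have := card_filter_add_card_filter_not (s := univ) (fun i => c i = 0)
  rw [card_univ, Fintype.card_fin] at this
  simp only [hammingNorm, ne_eq]
  omega

lemma sum_zmod_two {M : Type*} [AddCommMonoid M] (f : ZMod 2 → M) : ∑ b, f b = f 0 + f 1 :=
  Fin.sum_univ_two f

lemma prod_add_signChar_mul_eq_sum (v : Fin n → ZMod 2) (x y : R) :
    ∏ i, (x + signChar (v i) * y) =
      ∑ c, signChar (v ⬝ᵥ c) * (x ^ (n - hammingNorm c) * y ^ hammingNorm c) := by
  classical
  have hterm : ∀ i, x + signChar (v i) * y =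
      ∑ b : ZMod 2, signChar (v i * b) * (if b = 0 then x else y) := by
    simp [sum_zmod_two]
  simp_rw [hterm, prod_univ_sum, Fintype.piFinset_univ, prod_mul_distrib, prod_ite, prod_const,
    card_filter_eq_zero, dotProduct, signChar.map_sum_eq_prod_s12]
  push_cast
  rfl

lemma prod_add_signChar_mul_eq_pow (v : Fin n → ZMod 2) (x y : R) :
    ∏ i, (x + signChar (v i) * y) = (x + y) ^ (n - hammingNorm v) * (x - y) ^ hammingNorm v := by
  classical
  have hterm : ∀ i, x + signChar (v i) * y = if v i = 0 then x + y else x - y := by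
    intro i
    rcases (by decide : ∀ a : ZMod 2, a = 0 ∨ a = 1) (v i) with h | h <;>
      simp [h, signChar_one, sub_eq_add_neg]
  simp_rw [hterm, prod_ite, prod_const, card_filter_eq_zero]
  rfl

theorem weightEnum_add_sub (U : Submodule (ZMod 2) (Fin n → ZMod 2)) (x y : R) :
    weightEnum (U : Set (Fin n → ZMod 2)) (x + y) (x - y) =
      Nat.card U * weightEnum (dualSet n U) x y := by
  classical
  have hchar : ∀ c, ∑ v, (U : Set (Fin n → ZMod 2)).indicator (fun v => (signChar (v ⬝ᵥ c) : R)) v =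
      (dualSet n U).indicator (fun _ => (Nat.card U : R)) c := by
    intro c
    have := congrArg (Int.cast : ℤ → R) (sum_indicator_signChar_dotProduct U c)
    simp only [Set.indicator_apply] at this ⊢
    push_cast at this
    exact this
  simp only [weightEnum, ← prod_add_signChar_mul_eq_pow, prod_add_signChar_mul_eq_sum]
  simp only [Set.indicator_apply] at hchar ⊢
  calc _ = ∑ c, (∑ v, if v ∈ (U : Set (Fin n → ZMod 2)) then (signChar (v ⬝ᵥ c) : R) else 0) *
        (x ^ (n - hammingNorm c) * y ^ hammingNorm c) := by
        simp only [Finset.sum_mul, ite_mul, zero_mul]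
        rw [Finset.sum_comm]
        refine Finset.sum_congr rfl fun v _ => ?_
        split_ifs <;> simp
    _ = _ := by simp only [hchar, ite_mul, zero_mul, Finset.mul_sum, mul_ite, mul_zero]

lemma weightEnum_sdiff {S T : Set (Fin n → ZMod 2)} (h : T ⊆ S) (x y : R) :
    weightEnum (S \ T) x y = weightEnum S x y - weightEnum T x y := by
  simp only [weightEnum, Set.indicator_sdiff h, Pi.sub_apply, Finset.sum_sub_distrib]

lemma weightEnum_mul_right {S : Set (Fin n → ZMod 2)} {a b : R}
    (h : ∀ c ∈ S, a ^ hammingNorm c = b) (x y : R) :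
    weightEnum S x (a * y) = b * weightEnum S x y := by
  rw [weightEnum, weightEnum, Finset.mul_sum]
  refine Finset.sum_congr rfl fun c _ => ?_
  by_cases hc : c ∈ S
  · simp only [Set.indicator_of_mem hc, mul_pow, h c hc]
    ring
  · simp [hc]

lemma pow_dvd_weightEnum {S : Set (Fin n → ZMod 2)} {d : ℕ}
    (h : ∀ c ∈ S, d ≤ hammingNorm c ∧ d ≤ n - hammingNorm c) (x y : R) :
    (x * y) ^ d ∣ weightEnum S x y := by
  refine Finset.dvd_sum fun c _ => ?_
  by_cases hc : c ∈ S
  · rw [Set.indicator_of_mem hc, mul_pow]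
    exact mul_dvd_mul (pow_dvd_pow _ (h c hc).2) (pow_dvd_pow _ (h c hc).1)
  · simp [hc]

end WeightEnumerator

lemma cast_hammingNorm (c : Fin n → ZMod 2) : (hammingNorm c : ZMod 2) = ∑ i, c i := by
  have hcoord : ∀ a : ZMod 2, a = if a ≠ 0 then 1 else 0 := by decide
  conv_rhs => rw [Finset.sum_congr rfl fun i _ => hcoord (c i)]
  rw [Finset.sum_boole]
  rfl

lemma hammingNorm_add_add_two_mul (a b : Fin n → ZMod 2) :
    hammingNorm (a + b) + 2 * hammingNorm (a * b) = hammingNorm a + hammingNorm b := by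
  simp only [hammingNorm, Finset.card_filter, Finset.mul_sum, ← Finset.sum_add_distrib]
  have hcoord : ∀ x y : ZMod 2, ((if x + y ≠ 0 then 1 else 0) + 2 * if x * y ≠ 0 then 1 else 0) =
      (if x ≠ 0 then 1 else 0) + if y ≠ 0 then 1 else 0 := by decide
  exact Finset.sum_congr rfl fun i _ => hcoord (a i) (b i)

lemma hammingNorm_add_mod_four {a b : Fin n → ZMod 2} (h : a ⬝ᵥ b = 0) :
    hammingNorm (a + b) % 4 = (hammingNorm a + hammingNorm b) % 4 := by
  have hev : Even (hammingNorm (a * b)) := by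
    rw [← ZMod.natCast_eq_zero_iff_even, cast_hammingNorm]
    exact h
  obtain ⟨k, hk⟩ := hev
  have := hammingNorm_add_add_two_mul a b
  omega

lemma hammingNorm_add_one (s : Fin n → ZMod 2) : hammingNorm (s + 1) = n - hammingNorm s := by
  have h := hammingNorm_add_add_two_mul s 1
  have hone : hammingNorm (1 : Fin n → ZMod 2) = n := by simp [hammingNorm]
  rw [mul_one, hone] at h
  omega

def IsSelfOrthogonal (C : Submodule (ZMod 2) (Fin n → ZMod 2)) : Prop :=
  ∀ a ∈ C, ∀ b ∈ C, a ⬝ᵥ b = 0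

lemma isSelfOrthogonal_of_coe_eq_dualSet {C : Submodule (ZMod 2) (Fin n → ZMod 2)}
    (hsd : (C : Set (Fin n → ZMod 2)) = dualSet n C) : IsSelfOrthogonal C := by
  intro a ha b hb
  rw [← SetLike.mem_coe, hsd] at ha
  exact ha b hb

section SelfOrthogonal

variable {C : Submodule (ZMod 2) (Fin n → ZMod 2)}

lemma IsSelfOrthogonal.even_hammingNorm (hC : IsSelfOrthogonal C) {c : Fin n → ZMod 2}
    (hc : c ∈ C) : Even (hammingNorm c) := by
  have hidem : ∀ x : ZMod 2, x * x = x := by decide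
  rw [← ZMod.natCast_eq_zero_iff_even, cast_hammingNorm]
  simpa [dotProduct, hidem] using hC c hc c hc

lemma IsSelfOrthogonal.one_dotProduct_eq_zero (hC : IsSelfOrthogonal C) {c : Fin n → ZMod 2}
    (hc : c ∈ C) : 1 ⬝ᵥ c = 0 := by
  rw [_root_.one_dotProduct, ← cast_hammingNorm, ZMod.natCast_eq_zero_iff_even]
  exact hC.even_hammingNorm hc

def doublyEven (C : Submodule (ZMod 2) (Fin n → ZMod 2)) (hC : IsSelfOrthogonal C) :
    Submodule (ZMod 2) (Fin n → ZMod 2) where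
  carrier := {c | c ∈ C ∧ hammingNorm c % 4 = 0}
  add_mem' := by
    rintro a b ⟨ha, ha4⟩ ⟨hb, hb4⟩
    refine ⟨C.add_mem ha hb, ?_⟩
    rw [hammingNorm_add_mod_four (hC a ha b hb)]
    omega
  zero_mem' := ⟨C.zero_mem, by simp⟩
  smul_mem' r c hc := by
    rcases (by decide : ∀ x : ZMod 2, x = 0 ∨ x = 1) r with rfl | rfl
    · simp [C.zero_mem]
    · simpa using hc

lemma card_eq_two_mul_card_doublyEven (hC : IsSelfOrthogonal C)
    (hsing : ∃ c ∈ C, hammingNorm c % 4 = 2) :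
    Nat.card C = 2 * Nat.card (doublyEven C hC) := by
  obtain ⟨c₂, hc₂, hc₂4⟩ := hsing
  have hsub : (doublyEven C hC : Set (Fin n → ZMod 2)) ⊆ C := fun c hc => hc.1
  have htranslate : ∀ a, a ∈ doublyEven C hC ↔ a + c₂ ∈ (C : Set _) \ doublyEven C hC := by
    have hwt : ∀ a ∈ C, hammingNorm (a + c₂) % 4 = (hammingNorm a + 2) % 4 := fun a ha => by
      rw [hammingNorm_add_mod_four (hC a ha c₂ hc₂)]
      omega
    refine fun a => ⟨fun ⟨ha, ha4⟩ => ⟨C.add_mem ha hc₂, fun h => ?_⟩, fun ⟨h1, h2⟩ => ?_⟩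
    · have := hwt a ha
      have := h.2
      omega
    · have ha : a ∈ C := by simpa using C.sub_mem h1 hc₂
      have hnot : ¬ hammingNorm (a + c₂) % 4 = 0 := fun h => h2 ⟨h1, h⟩
      obtain ⟨k, hk⟩ := hC.even_hammingNorm h1
      have := hwt a ha
      exact ⟨ha, by omega⟩
  have hcard :
      Nat.card (doublyEven C hC) = Nat.card ↥((C : Set (Fin n → ZMod 2)) \ doublyEven C hC) :=
    Nat.card_congr ((Equiv.addRight c₂).subtypeEquiv htranslate)
  rw [Nat.card_coe_set_eq, Set.ncard_sdiff hsub] at hcard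
  have := Set.ncard_le_ncard hsub
  simp only [← Nat.card_coe_set_eq, SetLike.coe_sort_coe] at hcard this
  omega

end SelfOrthogonal

lemma pow_eq_pow_mod_four {R : Type*} [Monoid R] [HasDistribNeg R] {i : R} (hi : i ^ 2 = -1)
    (m : ℕ) : i ^ m = i ^ (m % 4) := by
  have h4 : i ^ 4 = 1 := by rw [show 4 = 2 * 2 from rfl, pow_mul, hi, neg_one_sq]
  conv_lhs => rw [← Nat.div_add_mod m 4, pow_add, pow_mul, h4, one_pow, one_mul]

section SelfDual

variable {C : Submodule (ZMod 2) (Fin n → ZMod 2)}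

lemma one_mem_of_coe_eq_dualSet (hsd : (C : Set (Fin n → ZMod 2)) = dualSet n C) :
    (1 : Fin n → ZMod 2) ∈ C := by
  rw [← SetLike.mem_coe, hsd]
  exact fun c hc => (isSelfOrthogonal_of_coe_eq_dualSet hsd).one_dotProduct_eq_zero hc

lemma add_one_mem_shadow (hsd : (C : Set (Fin n → ZMod 2)) = dualSet n C)
    {s : Fin n → ZMod 2}
    (hs : s ∈ dualSet n (doublyEven C (isSelfOrthogonal_of_coe_eq_dualSet hsd)) \ C) :
    s + 1 ∈ dualSet n (doublyEven C (isSelfOrthogonal_of_coe_eq_dualSet hsd)) \ C := by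
  have h1 := one_mem_of_coe_eq_dualSet hsd
  refine ⟨fun c hc => ?_, fun h => hs.2 ?_⟩
  · change (s + 1) ⬝ᵥ c = 0
    rw [add_dotProduct, show s ⬝ᵥ c = 0 from hs.1 c hc,
      (isSelfOrthogonal_of_coe_eq_dualSet hsd).one_dotProduct_eq_zero hc.1, add_zero]
  · simpa using C.sub_mem h h1

theorem card_mul_weightEnum_eq_weightEnum_shadow {R : Type*} [CommRing R]
    (hsd : (C : Set (Fin n → ZMod 2)) = dualSet n C) (hsing : ∃ c ∈ C, hammingNorm c % 4 = 2)
    {i : R} (hi : i ^ 2 = -1) (x y : R) :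
    Nat.card C * weightEnum (C : Set (Fin n → ZMod 2)) x y =
      weightEnum (dualSet n (doublyEven C (isSelfOrthogonal_of_coe_eq_dualSet hsd)) \ C)
        (x + i * y) (x - i * y) := by
  set hC := isSelfOrthogonal_of_coe_eq_dualSet hsd
  set D := doublyEven C hC
  have hDC : (D : Set (Fin n → ZMod 2)) ⊆ C := fun c hc => hc.1
  have hCD : (C : Set (Fin n → ZMod 2)) ⊆ dualSet n D := fun c hc d hd => hC c hc d hd.1
  have hCperp : (dotForm n).orthogonal C = C :=
    SetLike.coe_injective ((coe_orthogonal_dotForm C).trans hsd.symm)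
  have hcard : Nat.card ((dotForm n).orthogonal D) = 2 * Nat.card C := by
    have hD := card_orthogonal_mul_card D
    have hC2 := card_orthogonal_mul_card C
    rw [hCperp] at hC2
    refine Nat.eq_of_mul_eq_mul_right (Nat.card_pos (α := D)) ?_
    rw [hD, ← hC2, card_eq_two_mul_card_doublyEven hC hsing]
    ring
  have hD : weightEnum (D : Set (Fin n → ZMod 2)) x (i * y) =
      weightEnum (D : Set (Fin n → ZMod 2)) x y := by
    rw [weightEnum_mul_right (b := 1) (fun c hc => ?_), one_mul]
    rw [pow_eq_pow_mod_four hi, hc.2, pow_zero]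
  have hCminusD : weightEnum ((C : Set (Fin n → ZMod 2)) \ D) x (i * y) =
      -weightEnum ((C : Set (Fin n → ZMod 2)) \ D) x y := by
    rw [weightEnum_mul_right (b := -1) (fun c hc => ?_), neg_one_mul]
    obtain ⟨k, hk⟩ := hC.even_hammingNorm hc.1
    have h0 : ¬hammingNorm c % 4 = 0 := fun h => hc.2 ⟨hc.1, h⟩
    have : hammingNorm c % 4 = 2 := by omega
    rw [pow_eq_pow_mod_four hi, this, hi]
  have hMO := weightEnum_add_sub ((dotForm n).orthogonal D) x (i * y)
  rw [dualSet_coe_orthogonal_dotForm, coe_orthogonal_dotForm, hcard, hD] at hMO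
  have hMC := weightEnum_add_sub C x (i * y)
  rw [← hsd] at hMC
  rw [weightEnum_sdiff hCD, hMO, hMC]
  push_cast
  linear_combination (Nat.card C : R) * (hD + hCminusD - weightEnum_sdiff hDC x (i * y) -
    weightEnum_sdiff hDC x y)

end SelfDual

end BinaryCode

open BinaryCode

theorem stmt12_general (n d : ℕ) (C : Submodule (ZMod 2) (Fin n → ZMod 2))
    (hsd : (C : Set (Fin n → ZMod 2)) = dualSet n C)
    (hsing : ∃ c ∈ C, hammingNorm c % 4 = 2)
    (hd1 : ∀ s ∈ dualSet n {c | c ∈ C ∧ hammingNorm c % 4 = 0} \ C, d ≤ hammingNorm s) :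
    ((X 0) ^ 2 + (X 1) ^ 2) ^ d ∣ wEnum n C := by
  have hI : (MvPolynomial.C Complex.I : MvPolynomial (Fin 2) ℂ) ^ 2 = -1 := by
    rw [← map_pow, Complex.I_sq, map_neg, map_one]
  have hfactor : (X 0 : MvPolynomial (Fin 2) ℂ) ^ 2 + X 1 ^ 2 =
      (X 0 + MvPolynomial.C Complex.I * X 1) * (X 0 - MvPolynomial.C Complex.I * X 1) := by
    linear_combination (X 1 : MvPolynomial (Fin 2) ℂ) ^ 2 * hI
  have hshadow : ∀ s ∈ dualSet n (doublyEven C (isSelfOrthogonal_of_coe_eq_dualSet hsd)) \ C,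
      d ≤ hammingNorm s ∧ d ≤ n - hammingNorm s := fun s hs =>
    ⟨hd1 s hs, hammingNorm_add_one s ▸ hd1 _ (add_one_mem_shadow hsd hs)⟩
  have hdvd :
      ((X 0 + MvPolynomial.C Complex.I * X 1) * (X 0 - MvPolynomial.C Complex.I * X 1)) ^ d ∣
        (Nat.card C : MvPolynomial (Fin 2) ℂ) * wEnum n C := by
    rw [wEnum_eq_weightEnum, card_mul_weightEnum_eq_weightEnum_shadow hsd hsing hI]
    exact pow_dvd_weightEnum hshadow _ _
  have hunit : IsUnit (Nat.card C : MvPolynomial (Fin 2) ℂ) := by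
    rw [← map_natCast MvPolynomial.C]
    exact (isUnit_iff_ne_zero.mpr (Nat.cast_ne_zero.mpr Nat.card_pos.ne')).map _
  rw [hfactor]
  exact hunit.dvd_mul_left.mp hdvd

theorem stmt12 (n d : ℕ) (C : Submodule (ZMod 2) (Fin n → ZMod 2))
    (hsd : (C : Set (Fin n → ZMod 2)) = dualSet n C)
    (hsing : ∃ c ∈ C, hammingNorm c % 4 = 2)
    (hd1 : ∀ s ∈ dualSet n {c | c ∈ C ∧ hammingNorm c % 4 = 0} \ C, d ≤ hammingNorm s)
    (hd2 : ∃ s ∈ dualSet n {c | c ∈ C ∧ hammingNorm c % 4 = 0} \ C, hammingNorm s = d) :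
    ((X 0) ^ 2 + (X 1) ^ 2) ^ d ∣ wEnum n C :=
  stmt12_general n d C hsd hsing hd1
end

section
/- Let p be a prime with p ≡ 3 (mod 8), let Q be the set of nonzero quadratic residues mod p and N the set of non-residues, and let r_Q = ∑_{a∈Q} x^a, r_N = ∑_{b∈N} x^b in 𝔽₂[x]/(x^p − 1). Then r_Q² = r_N and r_Q · r_N = 1 (i.e. r_Q is invertible with inverse r_N). -/
/-!
Write `u = r_Q`, `v = r_N` and `j = ∑_{c ∈ ℤ/pℤ} x^c`. Squaring is additive in characteristic 2,
so `u² = ∑_{a ∈ Q} x^{2a}`, and `a ↦ 2a` maps `Q` onto `N` because `2` is a non-residue when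
`p ≡ ±3 (mod 8)`. Every `x^a` fixes `j`, so `u j = |Q| j = j` since `|Q| = (p - 1)/2` is odd
when `p ≡ 3 (mod 4)`. Finally `u + v + 1 = j`, and expanding `u j = j` gives
`u² + u v = v + 1`, i.e. `u v = 1`.
-/

open Classical in
/-- `r_T = ∑_{a ∈ T} x^a` in the group algebra `𝔽₂[x]/(x^p − 1) ≅ 𝔽₂[ℤ/pℤ]`,
where `T` is the set of elements of `ZMod p` satisfying a predicate. -/
noncomputable def rT (p : ℕ) [NeZero p] (P : ZMod p → Prop) :
    AddMonoidAlgebra (ZMod 2) (ZMod p) :=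
  ∑ a ∈ Finset.univ.filter P, AddMonoidAlgebra.single a 1

open Finset AddMonoidAlgebra

namespace AddMonoidAlgebra

variable {k G : Type*}

theorem single_one_mul_sum_univ [Semiring k] [AddGroup G] [Fintype G] (a : G) :
    single a (1 : k) * ∑ c : G, single c 1 = ∑ c : G, single c 1 := by
  simp only [mul_sum, single_mul_single, mul_one]
  exact Fintype.sum_equiv (Equiv.addLeft a) _ _ fun _ => rfl

theorem sum_single_one_mul_sum_univ [Semiring k] [AddGroup G] [Fintype G] (s : Finset G) :
    (∑ a ∈ s, single a (1 : k)) * ∑ c : G, single c 1 = #s • ∑ c : G, single c 1 := by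
  simp only [sum_mul, single_one_mul_sum_univ, sum_const]

theorem sum_single_one_sq [CommSemiring k] [CharP k 2] [AddCommMonoid G] (s : Finset G) :
    (∑ a ∈ s, single a (1 : k)) ^ 2 = ∑ a ∈ s, single (2 • a) 1 := by
  have : CharP k[G] 2 := charP_of_injective_algebraMap (FaithfulSMul.algebraMap_injective k _) 2
  simp only [sum_pow_char, single_pow, one_pow]

end AddMonoidAlgebra

theorem ne_zero_of_not_isSquare {M₀ : Type*} [MulZeroClass M₀] {a : M₀} (h : ¬IsSquare a) :
    a ≠ 0 :=
  fun ha => h (ha ▸ IsSquare.zero)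

namespace FiniteField

variable {F : Type*} [Field F] [Fintype F] {b : F}

theorem isSquare_mul_iff_of_not_isSquare (hb : ¬IsSquare b) {a : F} (ha : a ≠ 0) :
    IsSquare (b * a) ↔ ¬IsSquare a := by
  classical
  have hb0 := ne_zero_of_not_isSquare hb
  rw [← quadraticChar_neg_one_iff_not_isSquare] at hb
  rw [← quadraticChar_one_iff_isSquare (mul_ne_zero hb0 ha), map_mul, hb,
    ← quadraticChar_neg_one_iff_not_isSquare]
  constructor <;> intro h <;> linear_combination -h

theorem isSquare_iff_not_isSquare_mul (hb : ¬IsSquare b) (a : F) :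
    (a ≠ 0 ∧ IsSquare a) ↔ (b * a ≠ 0 ∧ ¬IsSquare (b * a)) := by
  by_cases ha : a = 0
  · simp [ha]
  · simp [ha, ne_zero_of_not_isSquare hb, isSquare_mul_iff_of_not_isSquare hb ha]

end FiniteField

section

variable {p : ℕ}

theorem rT_add_rT_not_add_one [NeZero p] (P : ZMod p → Prop) :
    rT p (fun a => a ≠ 0 ∧ P a) + rT p (fun a => a ≠ 0 ∧ ¬P a) + 1 = ∑ a, single a 1 := by
  classical
  simp only [rT, sum_filter, one_def]
  rw [← Fintype.sum_ite_eq' (0 : ZMod p) fun a => single a (1 : ZMod 2), ← sum_add_distrib,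
    ← sum_add_distrib]
  refine sum_congr rfl fun a _ => ?_
  by_cases ha : a = 0 <;> by_cases hP : P a <;> simp [ha, hP]

variable [Fact p.Prime]

theorem rT_residues_sq (h2 : ¬IsSquare (2 : ZMod p)) :
    rT p (fun a => a ≠ 0 ∧ IsSquare a) ^ 2 = rT p (fun b => b ≠ 0 ∧ ¬IsSquare b) := by
  rw [rT, rT, sum_single_one_sq]
  refine sum_equiv (Equiv.mulLeft₀ 2 (ne_zero_of_not_isSquare h2)) (fun a => ?_) fun a _ => ?_
  · simpa using FiniteField.isSquare_iff_not_isSquare_mul h2 a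
  · simp [two_mul]

theorem rT_residues_mul_sum_univ (hp : p % 4 = 3) :
    rT p (fun a => a ≠ 0 ∧ IsSquare a) * ∑ c, single c 1 = ∑ c, single c 1 := by
  classical
  have hneg : ¬IsSquare (-1 : ZMod p) := by
    rw [FiniteField.isSquare_neg_one_iff, ZMod.card]; omega
  set Q := univ.filter fun a : ZMod p => a ≠ 0 ∧ IsSquare a
  set N := univ.filter fun a : ZMod p => a ≠ 0 ∧ ¬IsSquare a
  have hQN : #Q = #N := card_equiv (Equiv.mulLeft₀ (-1) (ne_zero_of_not_isSquare hneg))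
    fun a => by simpa [Q, N] using FiniteField.isSquare_iff_not_isSquare_mul hneg a
  have hunits : #Q + #N = p - 1 := by
    have h := card_filter_add_card_filter_not (s := univ.filter (· ≠ (0 : ZMod p))) IsSquare
    rwa [filter_filter, filter_filter, filter_ne', card_erase_of_mem (mem_univ 0), card_univ,
      ZMod.card] at h
  have hodd : Odd #Q := by
    rw [Nat.odd_iff]; omega
  rw [rT, sum_single_one_mul_sum_univ, ← Nat.cast_smul_eq_nsmul (ZMod 2),
    ZMod.natCast_eq_one_iff_odd.mpr (by convert hodd), one_smul]

end

theorem stmt14 (p : ℕ) [Fact p.Prime] (hp : p % 8 = 3) :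
    (rT p (fun a => a ≠ 0 ∧ IsSquare a)) ^ 2 = rT p (fun b => b ≠ 0 ∧ ¬ IsSquare b) ∧
    (rT p (fun a => a ≠ 0 ∧ IsSquare a)) * rT p (fun b => b ≠ 0 ∧ ¬ IsSquare b) = 1 := by
  have h2 : ¬IsSquare (2 : ZMod p) := by
    rw [FiniteField.isSquare_two_iff, ZMod.card]; omega
  have hsq := rT_residues_sq h2
  have hmul := rT_residues_mul_sum_univ (p := p) (by omega)
  have hpart := rT_add_rT_not_add_one (p := p) IsSquare
  exact ⟨hsq, by linear_combination (rT p (fun a => a ≠ 0 ∧ IsSquare a) - 1) * hpart + hmul - hsq⟩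
end

section
/- Let Q̄ be a doubly-even binary linear code of odd length p (every codeword has weight divisible by 4), and let Q be the code generated by Q̄ together with the all-ones vector, with weight enumerators satisfying A_Q(x,y) = A_{Q̄}(x,y) + A_{Q̄}(y,x). If (x+y)^{d} divides A_{Q̄}(x,y) + A_{Q̄}(y,x), then (x²+y²)^{d} divides A_{Q̄}(x,y)² + A_{Q̄}(y,x)². -/
open MvPolynomial

lemma pow_mod4_zero (z : ℂ) (hz : z ^ 2 = -1) (n : ℕ) (h : n % 4 = 0) : z ^ n = 1 := by
  obtain ⟨k, rfl⟩ : ∃ k, n = 4 * k := ⟨n / 4, by omega⟩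
  rw [pow_mul]
  have h4 : z ^ 4 = 1 := by
    have : z ^ 4 = (z ^ 2) ^ 2 := by ring
    rw [this, hz]; ring
  rw [h4, one_pow]

lemma pow_mod4_three (z : ℂ) (hz : z ^ 2 = -1) (n : ℕ) (h : n % 4 = 3) : z ^ n = -z := by
  obtain ⟨k, rfl⟩ : ∃ k, n = 4 * k + 3 := ⟨n / 4, by omega⟩
  rw [pow_add, pow_mod4_zero z hz (4 * k) (by omega)]
  have : z ^ 3 = z ^ 2 * z := by ring
  rw [one_mul, this, hz]; ring

lemma aeval_wEnum (p : ℕ) (hp : p % 4 = 3) (Qbar : Submodule (ZMod 2) (Fin p → ZMod 2))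
    (hde : ∀ c ∈ Qbar, hammingNorm c % 4 = 0) (z : ℂ) (hz : z ^ 2 = -1) :
    aeval ![X 0, C z * X 1] (wEnum p (Qbar : Set (Fin p → ZMod 2)))
      = wEnum p (Qbar : Set (Fin p → ZMod 2)) := by
  unfold wEnum
  rw [map_sum]
  refine Finset.sum_congr rfl fun c _ => ?_
  by_cases hc : c ∈ (Qbar : Set (Fin p → ZMod 2))
  · rw [Set.indicator_of_mem hc]
    rw [map_mul, map_pow, map_pow, aeval_X, aeval_X]
    simp only [Matrix.cons_val_zero, Matrix.cons_val_one, Matrix.head_cons]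
    rw [mul_pow, ← C_pow, pow_mod4_zero z hz _ (hde c hc), map_one, one_mul]
  · rw [Set.indicator_of_notMem hc, map_zero]

lemma aeval_wEnum_swap (p : ℕ) (hp : p % 4 = 3) (Qbar : Submodule (ZMod 2) (Fin p → ZMod 2))
    (hde : ∀ c ∈ Qbar, hammingNorm c % 4 = 0) (z : ℂ) (hz : z ^ 2 = -1) :
    aeval ![X 0, C z * X 1]
        (rename (Equiv.swap (0 : Fin 2) 1) (wEnum p (Qbar : Set (Fin p → ZMod 2))))
      = C (-z) * rename (Equiv.swap (0 : Fin 2) 1) (wEnum p (Qbar : Set (Fin p → ZMod 2))) := by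
  rw [aeval_rename]
  unfold wEnum
  rw [map_sum, map_sum, Finset.mul_sum]
  refine Finset.sum_congr rfl fun c _ => ?_
  by_cases hc : c ∈ (Qbar : Set (Fin p → ZMod 2))
  · rw [Set.indicator_of_mem hc]
    rw [map_mul, map_pow, map_pow, aeval_X, aeval_X, map_mul, map_pow, map_pow,
      rename_X, rename_X]
    simp only [Function.comp_apply, Equiv.swap_apply_left, Equiv.swap_apply_right,
      Matrix.cons_val_zero, Matrix.cons_val_one, Matrix.head_cons]
    have hle : hammingNorm c ≤ p := by
      have := hammingNorm_le_card_fintype (x := c)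
      simpa using this
    have hmod : (p - hammingNorm c) % 4 = 3 := by
      have := hde c hc; omega
    rw [mul_pow, ← C_pow, pow_mod4_three z hz _ hmod]
    ring
  · rw [Set.indicator_of_notMem hc, map_zero, map_zero, mul_zero]

theorem stmt18 (p d : ℕ) (hp : p % 4 = 3)
    (Qbar : Submodule (ZMod 2) (Fin p → ZMod 2))
    (hde : ∀ c ∈ Qbar, hammingNorm c % 4 = 0)
    (hdiv : (X 0 + X 1) ^ d ∣
      wEnum p (Qbar : Set (Fin p → ZMod 2)) +
        rename (Equiv.swap (0 : Fin 2) 1) (wEnum p (Qbar : Set (Fin p → ZMod 2)))) :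
    ((X 0) ^ 2 + (X 1) ^ 2) ^ d ∣
      (wEnum p (Qbar : Set (Fin p → ZMod 2))) ^ 2 +
        (rename (Equiv.swap (0 : Fin 2) 1) (wEnum p (Qbar : Set (Fin p → ZMod 2)))) ^ 2 := by
  let A := wEnum p (Qbar : Set (Fin p → ZMod 2))
  let B := rename (Equiv.swap (0 : Fin 2) 1) (wEnum p (Qbar : Set (Fin p → ZMod 2)))
  show ((X 0) ^ 2 + (X 1) ^ 2) ^ d ∣ A ^ 2 + B ^ 2
  have hI : (Complex.I) ^ 2 = -1 := Complex.I_sq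
  have hI' : (-Complex.I) ^ 2 = -1 := by rw [neg_pow, hI]; ring
  have h1 : (X 0 + C Complex.I * X 1) ^ d ∣ A + C (-Complex.I) * B := by
    have := map_dvd (aeval (R := ℂ) (![X 0, C Complex.I * X 1] : Fin 2 → MvPolynomial (Fin 2) ℂ)) hdiv
    rw [map_pow, map_add, aeval_X, aeval_X, map_add] at this
    simp only [Matrix.cons_val_zero, Matrix.cons_val_one, Matrix.head_cons] at this
    rwa [aeval_wEnum p hp Qbar hde _ hI, aeval_wEnum_swap p hp Qbar hde _ hI] at this
  have h2 : (X 0 + C (-Complex.I) * X 1) ^ d ∣ A + C Complex.I * B := by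
    have := map_dvd (aeval (R := ℂ) (![X 0, C (-Complex.I) * X 1] : Fin 2 → MvPolynomial (Fin 2) ℂ)) hdiv
    rw [map_pow, map_add, aeval_X, aeval_X, map_add] at this
    simp only [Matrix.cons_val_zero, Matrix.cons_val_one, Matrix.head_cons] at this
    rw [aeval_wEnum p hp Qbar hde _ hI', aeval_wEnum_swap p hp Qbar hde _ hI'] at this
    simpa using this
  have hmul := mul_dvd_mul h1 h2
  have key : ((X 0 : MvPolynomial (Fin 2) ℂ) + C Complex.I * X 1) ^ d *
      (X 0 + C (-Complex.I) * X 1) ^ d = ((X 0) ^ 2 + (X 1) ^ 2) ^ d := by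
    rw [← mul_pow]
    congr 1
    have : ((X 0 : MvPolynomial (Fin 2) ℂ) + C Complex.I * X 1) *
        (X 0 + C (-Complex.I) * X 1)
        = X 0 ^ 2 - (C Complex.I) ^ 2 * X 1 ^ 2 := by
      rw [map_neg]; ring
    rw [this, ← C_pow, hI, map_neg, map_one]; ring
  have key2 : (A + C (-Complex.I) * B) * (A + C Complex.I * B) = A ^ 2 + B ^ 2 := by
    have : (A + C (-Complex.I) * B) * (A + C Complex.I * B)
        = A ^ 2 - (C Complex.I) ^ 2 * B ^ 2 := by
      rw [map_neg]; ring
    rw [this, ← C_pow, hI, map_neg, map_one]; ring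
  rw [key, key2] at hmul
  exact hmul
end
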